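/- Let Δ ⊂ ℝⁿ be an n-dimensional integral Delzant polytope and i a positive integer. Assume the Chow semistability criterion holds: E_Δ(i) ∫_Δ g dv − vol(Δ) Σ_{a ∈ Δ ∩ (ℤ/i)ⁿ} g(a) ≥ 0 for every g ∈ PL(Δ;i). Then Σ_{a ∈ Δ ∩ (ℤ/i)ⁿ} a = (E_Δ(i)/vol(Δ)) ∫_Δ x dv, i.e., the average of the lattice points of Δ ∩ (1/i)ℤⁿ equals the barycenter of Δ. -/

import Mathlib

open MeasureTheory

noncomputable section

/-- The points of `(ℤ/i)ⁿ = (1/i)ℤⁿ` in `ℝⁿ`. -/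
def latticePts (n i : ℕ) : Set (EuclideanSpace ℝ (Fin n)) :=
  {x | ∀ j, ∃ m : ℤ, x j = (m : ℝ) / (i : ℝ)}

/-- The integer lattice `ℤⁿ ⊂ ℝⁿ`. -/
def intPts (n : ℕ) : Set (EuclideanSpace ℝ (Fin n)) :=
  {x | ∀ j, ∃ m : ℤ, x j = (m : ℝ)}

/-- An `n`-dimensional integral polytope: convex hull of finitely many lattice
points, with nonempty interior. -/
def IsIntegralPolytope {n : ℕ} (Δ : Set (EuclideanSpace ℝ (Fin n))) : Prop :=
  (∃ V : Finset (EuclideanSpace ℝ (Fin n)), (↑V : Set (EuclideanSpace ℝ (Fin n))) ⊆ intPts n ∧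
    Δ = convexHull ℝ (↑V : Set (EuclideanSpace ℝ (Fin n)))) ∧
  (interior Δ).Nonempty

/-- Delzant condition: an integral polytope such that at each vertex the polytope
locally looks like the cone over `n` integral edge vectors forming a ℤ-basis of ℤⁿ
(i.e. an integer matrix of determinant `±1`). -/
def IsDelzant {n : ℕ} (Δ : Set (EuclideanSpace ℝ (Fin n))) : Prop :=
  IsIntegralPolytope Δ ∧
  ∀ v ∈ Set.extremePoints ℝ Δ, ∃ M : Matrix (Fin n) (Fin n) ℤ,
    (M.det = 1 ∨ M.det = -1) ∧ ∃ ε : ℝ, 0 < ε ∧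
      Δ ∩ Metric.ball v ε =
        {x | ∃ c : Fin n → ℝ, (∀ j, 0 ≤ c j) ∧
            ∀ k, x k = v k + ∑ j, c j * (M j k : ℝ)} ∩ Metric.ball v ε

/-- The concave envelope `g_φ` of the data `(a, φ a)`, `a ∈ A`:
`g_φ x = max {t | (x,t) ∈ G_φ}` where `G_φ` is the convex hull of the downward
rays below the graph of `φ` over `A`. -/
def concaveEnv {n : ℕ} (A : Set (EuclideanSpace ℝ (Fin n)))
    (φ : EuclideanSpace ℝ (Fin n) → ℝ) (x : EuclideanSpace ℝ (Fin n)) : ℝ :=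
  sSup {t : ℝ | (x, t) ∈ convexHull ℝ
    {p : EuclideanSpace ℝ (Fin n) × ℝ | p.1 ∈ A ∧ p.2 ≤ φ p.1}}

/-- The Ehrhart polynomial property: `E(i) = #(Δ ∩ (1/i)ℤⁿ) = #(iΔ ∩ ℤⁿ)`. -/
def IsEhrhart {n : ℕ} (Δ : Set (EuclideanSpace ℝ (Fin n))) (E : Polynomial ℚ) : Prop :=
  ∀ i : ℕ, 0 < i → E.eval (i : ℚ) = Nat.card ↥(Δ ∩ latticePts n i)

/-- The lattice boundary measure `dσ` of the paper: it is supported on `∂Δ`, and on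
any piece of a hyperplane `{⟨u,·⟩ = c}` with `u` a primitive integral vector it equals
the `(n-1)`-dimensional Hausdorff measure divided by `‖u‖` (so that `dh ∧ dσ = dv`). -/
def IsLatticeBoundaryMeasure {n : ℕ} (Δ : Set (EuclideanSpace ℝ (Fin n)))
    (σ : Measure (EuclideanSpace ℝ (Fin n))) : Prop :=
  σ (frontier Δ)ᶜ = 0 ∧
  ∀ u : EuclideanSpace ℝ (Fin n), (∀ j, ∃ m : ℤ, u j = (m : ℝ)) →
    (¬ ∃ (w : EuclideanSpace ℝ (Fin n)) (k : ℕ), 2 ≤ k ∧ (∀ j, ∃ m : ℤ, w j = (m : ℝ)) ∧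
        u = (k : ℝ) • w) →
    ∀ c : ℝ, ∀ s : Set (EuclideanSpace ℝ (Fin n)), MeasurableSet s →
      s ⊆ frontier Δ ∩ {x | (inner ℝ u x : ℝ) = c} →
      σ s = μH[(n : ℝ) - 1] s / ENNReal.ofReal ‖u‖

/-- A rational convex piecewise linear function on `Δ`: a finite max of affine
functions with rational coefficients. -/
def IsRatConvexPL {n : ℕ} (Δ : Set (EuclideanSpace ℝ (Fin n)))
    (h : EuclideanSpace ℝ (Fin n) → ℝ) : Prop :=
  ∃ (N : ℕ) (q : Fin (N + 1) → Fin n → ℚ) (c : Fin (N + 1) → ℚ),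
    ∀ x ∈ Δ, h x = ⨆ l, (∑ j, (q l j : ℝ) * x j + (c l : ℝ))

/-- A rational concave piecewise linear function on `Δ`: a finite min of affine
functions with rational coefficients. -/
def IsRatConcavePL {n : ℕ} (Δ : Set (EuclideanSpace ℝ (Fin n)))
    (g : EuclideanSpace ℝ (Fin n) → ℝ) : Prop :=
  ∃ (N : ℕ) (q : Fin (N + 1) → Fin n → ℚ) (c : Fin (N + 1) → ℚ),
    ∀ x ∈ Δ, g x = ⨅ l, (∑ j, (q l j : ℝ) * x j + (c l : ℝ))

/-! An affine function is its own concave envelope on the convex hull of the sample points, so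
the Chow inequality holds for every affine function and for its negative, hence with equality.
For the coordinate functions this equality says that the points of `Δ ∩ (ℤ/i)ⁿ` have the
barycenter of `Δ` as their average. -/

theorem concaveEnv_affineMap_of_mem_convexHull {n : ℕ} {A : Set (EuclideanSpace ℝ (Fin n))}
    (f : EuclideanSpace ℝ (Fin n) →ᵃ[ℝ] ℝ) {x : EuclideanSpace ℝ (Fin n)}
    (hx : x ∈ convexHull ℝ A) : concaveEnv A f x = f x := by
  set S : Set (EuclideanSpace ℝ (Fin n) × ℝ) := {p | p.1 ∈ A ∧ p.2 ≤ f p.1}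
  have hypograph_convex : Convex ℝ {p : EuclideanSpace ℝ (Fin n) × ℝ | p.2 ≤ f p.1} := by
    intro p hp q hq a b ha hb hab
    simp only [Set.mem_ofPred_eq, Prod.fst_add, Prod.snd_add, Prod.smul_fst, Prod.smul_snd,
      Convex.combo_affine_apply hab, smul_eq_mul] at hp hq ⊢
    gcongr
  have upper : ∀ t, (x, t) ∈ convexHull ℝ S → t ≤ f x := fun t ht =>
    convexHull_min (fun p hp => hp.2) hypograph_convex ht
  have graph_mem : (x, f x) ∈ convexHull ℝ S := by
    have h := Set.mem_image_of_mem ((AffineMap.id ℝ _).prod f) hx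
    rw [AffineMap.image_convexHull] at h
    exact convexHull_mono (by rintro _ ⟨a, ha, rfl⟩; exact ⟨ha, le_rfl⟩) h
  exact IsGreatest.csSup_eq ⟨graph_mem, upper⟩

theorem intPts_subset_latticePts {n i : ℕ} (hi : i ≠ 0) : intPts n ⊆ latticePts n i := by
  intro x hx j
  obtain ⟨m, hm⟩ := hx j
  exact ⟨m * i, by rw [hm]; push_cast; field_simp⟩

namespace IsIntegralPolytope

variable {n : ℕ} {Δ : Set (EuclideanSpace ℝ (Fin n))}

theorem isCompact (hΔ : IsIntegralPolytope Δ) : IsCompact Δ := by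
  obtain ⟨⟨V, -, rfl⟩, -⟩ := hΔ
  exact V.finite_toSet.isCompact_convexHull ℝ

theorem subset_convexHull_inter_latticePts (hΔ : IsIntegralPolytope Δ) {i : ℕ} (hi : i ≠ 0) :
    Δ ⊆ convexHull ℝ (Δ ∩ latticePts n i) := by
  obtain ⟨⟨V, hV, rfl⟩, -⟩ := hΔ
  exact convexHull_mono (Set.subset_inter (subset_convexHull ℝ _)
    (hV.trans (intPts_subset_latticePts hi)))

theorem volume_toReal_pos (hΔ : IsIntegralPolytope Δ) : 0 < (volume Δ).toReal :=
  ENNReal.toReal_pos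
    ((isOpen_interior.measure_pos volume hΔ.2).trans_le (measure_mono interior_subset)).ne'
    hΔ.isCompact.measure_lt_top.ne

end IsIntegralPolytope

theorem card_mul_setIntegral_eq_of_concaveEnv_ineq {n : ℕ}
    {A Δ : Set (EuclideanSpace ℝ (Fin n))} {μ : Measure (EuclideanSpace ℝ (Fin n))}
    (hΔ : MeasurableSet Δ) (hΔA : Δ ⊆ convexHull ℝ A)
    (hstab : ∀ φ : EuclideanSpace ℝ (Fin n) → ℝ,
      (Nat.card A : ℝ) * (∫ x in Δ, concaveEnv A φ x ∂μ) -
        (μ Δ).toReal * ∑ᶠ a ∈ A, concaveEnv A φ a ≥ 0)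
    (f : EuclideanSpace ℝ (Fin n) →ᵃ[ℝ] ℝ) :
    (Nat.card A : ℝ) * ∫ x in Δ, f x ∂μ = (μ Δ).toReal * ∑ᶠ a ∈ A, f a := by
  have affine_ineq (g : EuclideanSpace ℝ (Fin n) →ᵃ[ℝ] ℝ) :
      (Nat.card A : ℝ) * (∫ x in Δ, g x ∂μ) - (μ Δ).toReal * ∑ᶠ a ∈ A, g a ≥ 0 := by
    have h := hstab g
    rwa [setIntegral_congr_fun hΔ fun x hx => concaveEnv_affineMap_of_mem_convexHull g (hΔA hx),
      finsum_mem_congr rfl fun a ha =>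
        concaveEnv_affineMap_of_mem_convexHull g (subset_convexHull ℝ A ha)] at h
  have h_neg := affine_ineq (-f)
  simp only [AffineMap.coe_neg, Pi.neg_apply, integral_neg] at h_neg
  have finsum_neg : ∑ᶠ a ∈ A, -f a = -∑ᶠ a ∈ A, f a := by
    simpa using (mul_finsum_mem (s := A) (fun a => f a) (-1)).symm
  rw [finsum_neg] at h_neg
  linarith [affine_ineq f]

theorem stmt10_general {n i : ℕ} (hi : 0 < i)
    (Δ : Set (EuclideanSpace ℝ (Fin n))) (hΔ : IsDelzant Δ)
    (hstab : ∀ φ : EuclideanSpace ℝ (Fin n) → ℝ,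
      (Nat.card ↥(Δ ∩ latticePts n i) : ℝ) *
          (∫ x in Δ, concaveEnv (Δ ∩ latticePts n i) φ x) -
        (volume Δ).toReal *
          ∑ᶠ a ∈ Δ ∩ latticePts n i, concaveEnv (Δ ∩ latticePts n i) φ a ≥ 0) :
    ∀ j : Fin n, ∑ᶠ a ∈ Δ ∩ latticePts n i, a j =
      (Nat.card ↥(Δ ∩ latticePts n i) : ℝ) / (volume Δ).toReal *
        ∫ x in Δ, x j := by
  intro j
  have barycenter := card_mul_setIntegral_eq_of_concaveEnv_ineq
    hΔ.1.isCompact.isClosed.measurableSet (hΔ.1.subset_convexHull_inter_latticePts hi.ne') hstab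
    (EuclideanSpace.proj j : EuclideanSpace ℝ (Fin n) →L[ℝ] ℝ).toLinearMap.toAffineMap
  have hvol := hΔ.1.volume_toReal_pos
  simp only [LinearMap.coe_toAffineMap, ContinuousLinearMap.coe_coe,
    EuclideanSpace.coe_proj] at barycenter
  rw [div_mul_eq_mul_div, eq_div_iff hvol.ne']
  linarith

/-- Corollary 4.7: if the Chow semistability inequality holds for
all `g ∈ PL(Δ;i)` (here `E_Δ(i) = #(Δ ∩ (ℤ/i)ⁿ)`), then the sum of the lattice
points of `Δ ∩ (ℤ/i)ⁿ` equals `(E_Δ(i)/vol Δ) ∫_Δ x dv` componentwise. -/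
theorem stmt10 {n i : ℕ} (hn : 0 < n) (hi : 0 < i)
    (Δ : Set (EuclideanSpace ℝ (Fin n))) (hΔ : IsDelzant Δ)
    (hstab : ∀ φ : EuclideanSpace ℝ (Fin n) → ℝ,
      (Nat.card ↥(Δ ∩ latticePts n i) : ℝ) *
          (∫ x in Δ, concaveEnv (Δ ∩ latticePts n i) φ x) -
        (volume Δ).toReal *
          ∑ᶠ a ∈ Δ ∩ latticePts n i, concaveEnv (Δ ∩ latticePts n i) φ a ≥ 0) :
    ∀ j : Fin n, ∑ᶠ a ∈ Δ ∩ latticePts n i, a j =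
      (Nat.card ↥(Δ ∩ latticePts n i) : ℝ) / (volume Δ).toReal *
        ∫ x in Δ, x j :=
  stmt10_general hi Δ hΔ hstab
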